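/- Let G be a finite simple graph and let v be a pendant vertex of G (i.e., deg_G(v) = 1). Then γst(G) − 1 ≤ γst(G/v), where G/v is the vertex contraction of v in G (which, since v is pendant, equals G − v). -/

import Mathlib

/-- The degree of a vertex `x` in a graph `G`. -/
noncomputable def sdeg {V : Type*} (G : SimpleGraph V) (x : V) : ℕ :=
  (G.neighborSet x).ncard

/-- `D` is a strong dominating set of `G`: every vertex `x ∉ D` has a neighbor
`y ∈ D` with `deg x ≤ deg y`. -/
def IsStrongDominating {V : Type*} (G : SimpleGraph V) (D : Set V) : Prop :=
  ∀ x ∉ D, ∃ y ∈ D, G.Adj x y ∧ sdeg G x ≤ sdeg G y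

/-- The strong domination number of `G`. -/
noncomputable def sdn {V : Type*} (G : SimpleGraph V) : ℕ :=
  sInf {n | ∃ D : Set V, IsStrongDominating G D ∧ D.ncard = n}

/-- Vertex deletion `G - v`: the induced subgraph on the complement of `{v}`. -/
def delVtx {V : Type*} (G : SimpleGraph V) (v : V) : SimpleGraph {x : V // x ≠ v} where
  Adj a b := G.Adj a.1 b.1
  symm := ⟨fun a b h => G.symm.symm _ _ h⟩
  loopless := ⟨fun a h => G.loopless.irrefl a.1 h⟩

/-- Vertex contraction `G / v`: delete `v` and put a clique on its open neighborhood. -/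
def contractVtx {V : Type*} (G : SimpleGraph V) (v : V) : SimpleGraph {x : V // x ≠ v} where
  Adj a b := a ≠ b ∧ (G.Adj a.1 b.1 ∨ (G.Adj v a.1 ∧ G.Adj v b.1))
  symm := by
    constructor
    rintro a b ⟨hab, h | ⟨ha, hb⟩⟩
    · exact ⟨hab.symm, Or.inl h.symm⟩
    · exact ⟨hab.symm, Or.inr ⟨hb, ha⟩⟩
  loopless := by constructor; rintro a ⟨h, -⟩; exact h rfl

/-- `G ⊙ v`: remove all edges between any pair of neighbors of `v`. -/
def odotVtx {V : Type*} (G : SimpleGraph V) (v : V) : SimpleGraph V where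
  Adj x y := G.Adj x y ∧ ¬(G.Adj v x ∧ G.Adj v y)
  symm := by
    constructor
    rintro x y ⟨h, hn⟩
    exact ⟨h.symm, fun hc => hn ⟨hc.2, hc.1⟩⟩
  loopless := by constructor; rintro x ⟨h, -⟩; exact G.loopless.irrefl x h

/-- Edge contraction `G / uv`: merge `v` into `u`. -/
def contractEdge {V : Type*} (G : SimpleGraph V) (u v : V) : SimpleGraph {x : V // x ≠ v} where
  Adj a b := a ≠ b ∧ (G.Adj a.1 b.1 ∨ (a.1 = u ∧ G.Adj v b.1) ∨ (b.1 = u ∧ G.Adj v a.1))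
  symm := by
    constructor
    rintro a b ⟨hab, h | h | h⟩
    · exact ⟨hab.symm, Or.inl h.symm⟩
    · exact ⟨hab.symm, Or.inr (Or.inr h)⟩
    · exact ⟨hab.symm, Or.inr (Or.inl h)⟩
  loopless := by constructor; rintro a ⟨h, -⟩; exact h rfl

/-- The star `K_{1,n}` with center `none` and leaves `some i`. -/
def starG (n : ℕ) : SimpleGraph (Option (Fin n)) where
  Adj a b := (a = none ∧ b ≠ none) ∨ (a ≠ none ∧ b = none)
  symm := by
    constructor
    rintro a b (⟨h1, h2⟩ | ⟨h1, h2⟩)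
    · exact Or.inr ⟨h2, h1⟩
    · exact Or.inl ⟨h2, h1⟩
  loopless := by
    constructor
    rintro a (⟨h1, h2⟩ | ⟨h1, h2⟩)
    exacts [h2 h1, h1 h2]

/-- The path graph `P_n` on vertices `0, …, n-1`, consecutive integers adjacent. -/
def pathG (n : ℕ) : SimpleGraph (Fin n) where
  Adj i j := i.1 + 1 = j.1 ∨ j.1 + 1 = i.1
  symm := ⟨fun i j h => Or.symm h⟩
  loopless := by constructor; rintro i (h | h) <;> omega


section StrongDomination

variable {V : Type*} (G : SimpleGraph V)

lemma exists_isStrongDominating_ncard_eq_sdn :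
    ∃ D : Set V, IsStrongDominating G D ∧ D.ncard = sdn G :=
  Nat.sInf_mem (s := {n | ∃ D : Set V, IsStrongDominating G D ∧ D.ncard = n})
    ⟨_, Set.univ, fun x hx => absurd (Set.mem_univ x) hx, rfl⟩

lemma sdn_le_ncard {D : Set V} (hD : IsStrongDominating G D) : sdn G ≤ D.ncard :=
  Nat.sInf_le ⟨D, hD, rfl⟩

lemma contractVtx_eq_delVtx {v : V} (hv : (G.neighborSet v).Subsingleton) :
    contractVtx G v = delVtx G v := by
  ext a b
  refine ⟨?_, fun h => ⟨fun hab => G.ne_of_adj h (congrArg Subtype.val hab), Or.inl h⟩⟩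
  rintro ⟨hab, h | ⟨ha, hb⟩⟩
  · exact h
  · exact absurd (Subtype.ext (hv ha hb)) hab

lemma image_val_neighborSet_delVtx (v : V) (a : {x // x ≠ v}) :
    Subtype.val '' (delVtx G v).neighborSet a = G.neighborSet a \ {v} := by
  ext b
  constructor
  · rintro ⟨b, hab, rfl⟩
    exact ⟨hab, b.2⟩
  · rintro ⟨hab, hbv⟩
    exact ⟨⟨b, hbv⟩, hab, rfl⟩

lemma sdeg_delVtx (v : V) (a : {x // x ≠ v}) :
    sdeg (delVtx G v) a = (G.neighborSet a \ {v}).ncard := by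
  rw [sdeg, ← Set.ncard_image_of_injective _ Subtype.val_injective,
    image_val_neighborSet_delVtx]

lemma sdeg_delVtx_le {v : V} (a : {x // x ≠ v}) : sdeg (delVtx G v) a ≤ sdeg G a :=
  (sdeg_delVtx G v a).trans_le (Set.ncard_sdiff_singleton_le _ _)

lemma sdeg_delVtx_of_not_adj {v : V} {a : {x // x ≠ v}} (ha : ¬G.Adj a v) :
    sdeg (delVtx G v) a = sdeg G a := by
  rw [sdeg_delVtx, Set.sdiff_singleton_eq_self (s := G.neighborSet a) ha, sdeg]

/-- A vertex outside the set other than `v` is not adjacent to `v`, so it keeps its degree in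
`G - v`, while the degrees of its dominators can only grow back in `G`. -/
lemma IsStrongDominating.insert_image_delVtx {u v : V} (hN : G.neighborSet v = {u})
    (hdeg : sdeg G v ≤ sdeg G u) {D : Set {x // x ≠ v}}
    (hD : IsStrongDominating (delVtx G v) D) :
    IsStrongDominating G (insert u (Subtype.val '' D)) := by
  intro x hx
  by_cases hxv : x = v
  · rw [hxv]
    exact ⟨u, Set.mem_insert u _, show u ∈ G.neighborSet v by simp [hN], hdeg⟩
  have hxu : x ≠ u := by rintro rfl; exact hx (Set.mem_insert x _)
  have hxv_not_adj : ¬G.Adj x v := fun h =>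
    hxu (by simpa [hN] using show x ∈ G.neighborSet v from h.symm)
  obtain ⟨y, hyD, hxy, hdeg_xy⟩ :=
    hD ⟨x, hxv⟩ fun h => hx (Set.mem_insert_of_mem _ ⟨_, h, rfl⟩)
  refine ⟨y, Set.mem_insert_of_mem _ ⟨y, hyD, rfl⟩, hxy, ?_⟩
  calc sdeg G x = sdeg (delVtx G v) ⟨x, hxv⟩ :=
        (sdeg_delVtx_of_not_adj G (a := ⟨x, hxv⟩) hxv_not_adj).symm
    _ ≤ sdeg (delVtx G v) y := hdeg_xy
    _ ≤ sdeg G y := sdeg_delVtx_le G y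

lemma sdn_le_sdn_delVtx_add_one {u v : V} (hN : G.neighborSet v = {u})
    (hdeg : sdeg G v ≤ sdeg G u) : sdn G ≤ sdn (delVtx G v) + 1 := by
  obtain ⟨D, hD, hcard⟩ := exists_isStrongDominating_ncard_eq_sdn (delVtx G v)
  calc sdn G ≤ (insert u (Subtype.val '' D)).ncard :=
        sdn_le_ncard G (hD.insert_image_delVtx G hN hdeg)
    _ ≤ (Subtype.val '' D).ncard + 1 := Set.ncard_insert_le _ _
    _ = sdn (delVtx G v) + 1 := by
      rw [Set.ncard_image_of_injective _ Subtype.val_injective, hcard]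

end StrongDomination

/-- if v is pendant, then γst(G) − 1 ≤ γst(G/v). -/
theorem sdn_sub_one_le_sdn_contractVtx_pendant {V : Type*} [Fintype V] (G : SimpleGraph V)
    (v : V) (hv : sdeg G v = 1) :
    (sdn G : ℤ) - 1 ≤ (sdn (contractVtx G v) : ℤ) := by
  obtain ⟨u, hN⟩ := Set.ncard_eq_one.mp hv
  have hdeg : sdeg G v ≤ sdeg G u := by
    have hvu : G.Adj v u := show u ∈ G.neighborSet v by simp [hN]
    rw [hv]
    exact (Set.ncard_pos).2 ⟨v, hvu.symm⟩
  rw [contractVtx_eq_delVtx G (hN ▸ Set.subsingleton_singleton)]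
  have := sdn_le_sdn_delVtx_add_one G hN hdeg
  omega
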